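/- Let α, β, γ > 0 with αβγ = 1, and let Q_{α,β,γ}(ξ) = ξ₁₁² + ξ₂₂² + ξ₃₃² − 2ξ₁₁ξ₂₂ − 2ξ₂₂ξ₃₃ − 2ξ₃₃ξ₁₁ + α ξ₁₂² + β ξ₂₃² + γ ξ₃₁². If Q₁ is any quadratic form on 3×3 real matrices satisfying 0 ≤ Q₁(x ⊗ y) ≤ Q_{α,β,γ}(x ⊗ y) for all x, y ∈ ℝ³, then there exists λ ∈ [0, 1] such that Q₁(x ⊗ y) = λ Q_{α,β,γ}(x ⊗ y) for all x, y ∈ ℝ³; i.e., Q_{α,β,γ} is an extremal quasiconvex quadratic form in the sense of Definition 2. -/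
import Mathlib

/-- The tensor (outer) product of two vectors in ℝ³, as a 3×3 matrix. -/
def outer (x y : Fin 3 → ℝ) : Matrix (Fin 3) (Fin 3) ℝ :=
  fun i j => x i * y j

/-- The quadratic form `Q_{α,β,γ}(ξ) = ξ₁₁² + ξ₂₂² + ξ₃₃² − 2ξ₁₁ξ₂₂ − 2ξ₂₂ξ₃₃ − 2ξ₃₃ξ₁₁
+ α ξ₁₂² + β ξ₂₃² + γ ξ₃₁²`. -/
def Qgen (α β γ : ℝ) (ξ : Matrix (Fin 3) (Fin 3) ℝ) : ℝ :=
  ξ 0 0 ^ 2 + ξ 1 1 ^ 2 + ξ 2 2 ^ 2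
    - 2 * ξ 0 0 * ξ 1 1 - 2 * ξ 1 1 * ξ 2 2 - 2 * ξ 2 2 * ξ 0 0
    + α * ξ 0 1 ^ 2 + β * ξ 1 2 ^ 2 + γ * ξ 2 0 ^ 2

private lemma aux_lin (A B : ℝ) (h : ∀ t : ℝ, 0 ≤ A * t ^ 2 + B * t) : B = 0 := by
  have hd := discrim_le_zero (a := A) (b := B) (c := 0) (fun t => by nlinarith [h t])
  rw [discrim] at hd
  have h2 : B ^ 2 = 0 := le_antisymm (by nlinarith) (sq_nonneg B)
  exact pow_eq_zero_iff (by norm_num) |>.mp h2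

private lemma aux_cancel (w x : ℝ) (hw : 0 < w) (h : w * x = 0) : x = 0 := by
  rcases mul_eq_zero.mp h with h1 | h2
  · exact absurd h1 (ne_of_gt hw)
  · exact h2

private lemma aux_quart (A B C : ℝ) (h : ∀ t : ℝ, 0 ≤ A * t ^ 2 + B * t ^ 3 + C * t ^ 4) :
    0 ≤ A := by
  by_contra hA
  push_neg at hA
  set D := |B| + |C| with hD
  have hD0 : 0 ≤ D := by positivity
  set t := min 1 ((-A) / (D + 1)) with ht
  have ht0 : 0 < t := by
    apply lt_min one_pos
    apply div_pos (by linarith) (by linarith)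
  have ht1 : t ≤ 1 := min_le_left _ _
  have ht2 : t * (D + 1) ≤ -A := by
    have := min_le_right 1 ((-A) / (D + 1))
    calc t * (D + 1) ≤ ((-A)/(D+1)) * (D+1) := by nlinarith
    _ = -A := by field_simp
  have h3 : t ^ 3 ≤ t ^ 2 := by nlinarith
  have h4 : t ^ 4 ≤ t ^ 3 := by nlinarith
  have hB3 : B * t ^ 3 ≤ |B| * t ^ 3 := by nlinarith [le_abs_self B, pow_pos ht0 3]
  have hC4 : C * t ^ 4 ≤ |C| * t ^ 4 := by nlinarith [le_abs_self C, pow_pos ht0 4]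
  have habs : |C| * t ^ 4 ≤ |C| * t ^ 3 := by nlinarith [abs_nonneg C]
  have hfin : A * t ^ 2 + B * t ^ 3 + C * t ^ 4 < 0 := by
    nlinarith [pow_pos ht0 2, pow_pos ht0 3]
  linarith [h t]

private lemma aux_cube (B C : ℝ) (h : ∀ t : ℝ, 0 ≤ B * t ^ 3 + C * t ^ 4) : B = 0 := by
  have key : ∀ B' C' : ℝ, (∀ t : ℝ, 0 ≤ B' * t ^ 3 + C' * t ^ 4) → B' ≤ 0 := by
    intro B' C' h'
    by_contra hB
    push_neg at hB
    set t := -(min 1 (B' / (|C'| + 1))) with ht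
    have hm0 : 0 < min 1 (B' / (|C'| + 1)) := by
      apply lt_min one_pos
      apply div_pos hB (by positivity)
    have hm1 : min 1 (B' / (|C'| + 1)) ≤ 1 := min_le_left _ _
    have hm2 : min 1 (B' / (|C'| + 1)) * (|C'| + 1) ≤ B' := by
      have := min_le_right 1 (B' / (|C'| + 1))
      calc min 1 (B' / (|C'| + 1)) * (|C'| + 1)
          ≤ (B' / (|C'| + 1)) * (|C'| + 1) := by nlinarith [abs_nonneg C']
      _ = B' := by field_simp
    have h5 := h' t
    set s := min 1 (B' / (|C'| + 1))
    have hts : t = -s := rfl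
    rw [hts] at h5
    have hexp : (-s)^3 = -(s^3) := by ring
    have hexp2 : (-s)^4 = s^4 := by ring
    rw [hexp, hexp2] at h5
    have hC : C' * s ^ 4 ≤ (|C'| * s) * s ^ 3 := by
      nlinarith [le_abs_self C', pow_pos hm0 3, pow_pos hm0 4, abs_nonneg C']
    have hkey : (B' - |C'| * s) * s ^ 3 ≤ 0 := by nlinarith
    have hss : B' ≤ |C'| * s := by nlinarith [hkey, pow_pos hm0 3]
    nlinarith [abs_nonneg C']
  have h1 := key B C h
  have h2 := key (-B) C (fun t => by have := h (-t); nlinarith [h (-t)])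
  linarith

set_option maxHeartbeats 4000000 in
/-- for `α, β, γ > 0` with `αβγ = 1`, the quadratic form `Q_{α,β,γ}` is an
extremal quasiconvex quadratic form in the sense of Definition 2: any quadratic form `Q₁`
with `0 ≤ Q₁(x⊗y) ≤ Q_{α,β,γ}(x⊗y)` for all `x, y` agrees with `λ Q_{α,β,γ}` on rank-one
matrices, for some `λ ∈ [0,1]`. -/
theorem Qgen_extremal (α β γ : ℝ) (hα : 0 < α) (hβ : 0 < β) (hγ : 0 < γ)
    (habc : α * β * γ = 1)
    (Q₁ : QuadraticForm ℝ (Matrix (Fin 3) (Fin 3) ℝ))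
    (h : ∀ x y : Fin 3 → ℝ,
      0 ≤ Q₁ (outer x y) ∧ Q₁ (outer x y) ≤ Qgen α β γ (outer x y)) :
    ∃ l : ℝ, 0 ≤ l ∧ l ≤ 1 ∧
      ∀ x y : Fin 3 → ℝ, Q₁ (outer x y) = l * Qgen α β γ (outer x y) := by
  set u := Real.sqrt γ with hu_def
  set v := Real.sqrt (α * γ) with hv_def
  have hu2 : u ^ 2 = γ := Real.sq_sqrt (le_of_lt hγ)
  have hv2 : v ^ 2 = α * γ := Real.sq_sqrt (by positivity)
  have hu0 : 0 < u := Real.sqrt_pos.mpr hγ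
  have hv0 : 0 < v := Real.sqrt_pos.mpr (by positivity)
  set B := QuadraticMap.associated (R := ℝ) Q₁ with hB
  have hsymB : ∀ vv ww : Matrix (Fin 3) (Fin 3) ℝ, B vv ww = B ww vv := fun vv ww => by
    simpa only [RingHom.id_apply] using QuadraticMap.associated_isSymm ℝ Q₁ vv ww
  obtain ⟨c, hc⟩ : ∃ c : Fin 3 → Fin 3 → Fin 3 → Fin 3 → ℝ,
      ∀ i j k l, c i j k l = B (Matrix.single i j 1) (Matrix.single k l 1) :=
    ⟨_, fun _ _ _ _ => rfl⟩
  have hexpand : ∀ x y : Fin 3 → ℝ, Q₁ (outer x y) =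
      (c 0 0 0 0)*(x 0)^2*(y 0)^2 + (c 0 1 0 1)*(x 0)^2*(y 1)^2 + (c 0 2 0 2)*(x 0)^2*(y 2)^2 + (c 1 0 1 0)*(x 1)^2*(y 0)^2 + (c 1 1 1 1)*(x 1)^2*(y 1)^2 + (c 1 2 1 2)*(x 1)^2*(y 2)^2 + (c 2 0 2 0)*(x 2)^2*(y 0)^2 + (c 2 1 2 1)*(x 2)^2*(y 1)^2 + (c 2 2 2 2)*(x 2)^2*(y 2)^2 + 2*(c 0 0 0 1)*(x 0)^2*(y 0)*(y 1) + 2*(c 0 0 0 2)*(x 0)^2*(y 0)*(y 2) + 2*(c 0 0 1 0)*(x 0)*(x 1)*(y 0)^2 + 2*(c 0 0 2 0)*(x 0)*(x 2)*(y 0)^2 + 2*(c 0 1 0 2)*(x 0)^2*(y 1)*(y 2) + 2*(c 0 1 1 1)*(x 0)*(x 1)*(y 1)^2 + 2*(c 0 1 2 1)*(x 0)*(x 2)*(y 1)^2 + 2*(c 0 2 1 2)*(x 0)*(x 1)*(y 2)^2 + 2*(c 0 2 2 2)*(x 0)*(x 2)*(y 2)^2 + 2*(c 1 0 1 1)*(x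 1)^2*(y 0)*(y 1) + 2*(c 1 0 1 2)*(x 1)^2*(y 0)*(y 2) + 2*(c 1 0 2 0)*(x 1)*(x 2)*(y 0)^2 + 2*(c 1 1 1 2)*(x 1)^2*(y 1)*(y 2) + 2*(c 1 1 2 1)*(x 1)*(x 2)*(y 1)^2 + 2*(c 1 2 2 2)*(x 1)*(x 2)*(y 2)^2 + 2*(c 2 0 2 1)*(x 2)^2*(y 0)*(y 1) + 2*(c 2 0 2 2)*(x 2)^2*(y 0)*(y 2) + 2*(c 2 1 2 2)*(x 2)^2*(y 1)*(y 2) + 2*(c 0 0 1 1)*(x 0)*(x 1)*(y 0)*(y 1) + 2*(c 0 0 1 2)*(x 0)*(x 1)*(y 0)*(y 2) + 2*(c 0 0 2 1)*(x 0)*(x 2)*(y 0)*(y 1) + 2*(c 0 0 2 2)*(x 0)*(x 2)*(y 0)*(y 2) + 2*(c 0 1 1 0)*(x 0)*(x 1)*(y 0)*(y 1) + 2*(c 0 1 1 2)*(x 0)*(x 1)*(y 1)*(y 2) + 2*(c 0 1 2 0)*(x 0)*(x 2)*(y 0)*(y 1) + 2*(c 0 1 2 2)*(x 0)*(x 2)*(y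 1)*(y 2) + 2*(c 0 2 1 0)*(x 0)*(x 1)*(y 0)*(y 2) + 2*(c 0 2 1 1)*(x 0)*(x 1)*(y 1)*(y 2) + 2*(c 0 2 2 0)*(x 0)*(x 2)*(y 0)*(y 2) + 2*(c 0 2 2 1)*(x 0)*(x 2)*(y 1)*(y 2) + 2*(c 1 0 2 1)*(x 1)*(x 2)*(y 0)*(y 1) + 2*(c 1 0 2 2)*(x 1)*(x 2)*(y 0)*(y 2) + 2*(c 1 1 2 0)*(x 1)*(x 2)*(y 0)*(y 1) + 2*(c 1 1 2 2)*(x 1)*(x 2)*(y 1)*(y 2) + 2*(c 1 2 2 0)*(x 1)*(x 2)*(y 0)*(y 2) + 2*(c 1 2 2 1)*(x 1)*(x 2)*(y 1)*(y 2) := by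
    intro x y
    have hrep : outer x y = ∑ i : Fin 3, ∑ j : Fin 3, (x i * y j) • Matrix.single i j (1:ℝ) := by
      ext a b
      simp [outer, Matrix.sum_apply, Matrix.single, Fin.sum_univ_three]
      fin_cases a <;> fin_cases b <;> simp
    have h0 : Q₁ (outer x y) = B (outer x y) (outer x y) :=
      (QuadraticMap.associated_eq_self_apply ℝ Q₁ (outer x y)).symm
    rw [h0]
    nth_rewrite 1 [hrep]; nth_rewrite 1 [hrep]
    simp only [Fin.sum_univ_three, map_add, LinearMap.add_apply, map_smul,
      LinearMap.smul_apply, smul_eq_mul]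
    simp only [hc]
    linear_combination ((x 0) * (y 0) * ((x 0) * (y 1))) * hsymB (Matrix.single 0 1 1) (Matrix.single 0 0 1)
      + ((x 0) * (y 0) * ((x 0) * (y 2))) * hsymB (Matrix.single 0 2 1) (Matrix.single 0 0 1)
      + ((x 0) * (y 0) * ((x 1) * (y 0))) * hsymB (Matrix.single 1 0 1) (Matrix.single 0 0 1)
      + ((x 0) * (y 0) * ((x 1) * (y 1))) * hsymB (Matrix.single 1 1 1) (Matrix.single 0 0 1)
      + ((x 0) * (y 0) * ((x 1) * (y 2))) * hsymB (Matrix.single 1 2 1) (Matrix.single 0 0 1)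
      + ((x 0) * (y 0) * ((x 2) * (y 0))) * hsymB (Matrix.single 2 0 1) (Matrix.single 0 0 1)
      + ((x 0) * (y 0) * ((x 2) * (y 1))) * hsymB (Matrix.single 2 1 1) (Matrix.single 0 0 1)
      + ((x 0) * (y 0) * ((x 2) * (y 2))) * hsymB (Matrix.single 2 2 1) (Matrix.single 0 0 1)
      + ((x 0) * (y 1) * ((x 0) * (y 2))) * hsymB (Matrix.single 0 2 1) (Matrix.single 0 1 1)
      + ((x 0) * (y 1) * ((x 1) * (y 0))) * hsymB (Matrix.single 1 0 1) (Matrix.single 0 1 1)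
      + ((x 0) * (y 1) * ((x 1) * (y 1))) * hsymB (Matrix.single 1 1 1) (Matrix.single 0 1 1)
      + ((x 0) * (y 1) * ((x 1) * (y 2))) * hsymB (Matrix.single 1 2 1) (Matrix.single 0 1 1)
      + ((x 0) * (y 1) * ((x 2) * (y 0))) * hsymB (Matrix.single 2 0 1) (Matrix.single 0 1 1)
      + ((x 0) * (y 1) * ((x 2) * (y 1))) * hsymB (Matrix.single 2 1 1) (Matrix.single 0 1 1)
      + ((x 0) * (y 1) * ((x 2) * (y 2))) * hsymB (Matrix.single 2 2 1) (Matrix.single 0 1 1)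
      + ((x 0) * (y 2) * ((x 1) * (y 0))) * hsymB (Matrix.single 1 0 1) (Matrix.single 0 2 1)
      + ((x 0) * (y 2) * ((x 1) * (y 1))) * hsymB (Matrix.single 1 1 1) (Matrix.single 0 2 1)
      + ((x 0) * (y 2) * ((x 1) * (y 2))) * hsymB (Matrix.single 1 2 1) (Matrix.single 0 2 1)
      + ((x 0) * (y 2) * ((x 2) * (y 0))) * hsymB (Matrix.single 2 0 1) (Matrix.single 0 2 1)
      + ((x 0) * (y 2) * ((x 2) * (y 1))) * hsymB (Matrix.single 2 1 1) (Matrix.single 0 2 1)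
      + ((x 0) * (y 2) * ((x 2) * (y 2))) * hsymB (Matrix.single 2 2 1) (Matrix.single 0 2 1)
      + ((x 1) * (y 0) * ((x 1) * (y 1))) * hsymB (Matrix.single 1 1 1) (Matrix.single 1 0 1)
      + ((x 1) * (y 0) * ((x 1) * (y 2))) * hsymB (Matrix.single 1 2 1) (Matrix.single 1 0 1)
      + ((x 1) * (y 0) * ((x 2) * (y 0))) * hsymB (Matrix.single 2 0 1) (Matrix.single 1 0 1)
      + ((x 1) * (y 0) * ((x 2) * (y 1))) * hsymB (Matrix.single 2 1 1) (Matrix.single 1 0 1)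
      + ((x 1) * (y 0) * ((x 2) * (y 2))) * hsymB (Matrix.single 2 2 1) (Matrix.single 1 0 1)
      + ((x 1) * (y 1) * ((x 1) * (y 2))) * hsymB (Matrix.single 1 2 1) (Matrix.single 1 1 1)
      + ((x 1) * (y 1) * ((x 2) * (y 0))) * hsymB (Matrix.single 2 0 1) (Matrix.single 1 1 1)
      + ((x 1) * (y 1) * ((x 2) * (y 1))) * hsymB (Matrix.single 2 1 1) (Matrix.single 1 1 1)
      + ((x 1) * (y 1) * ((x 2) * (y 2))) * hsymB (Matrix.single 2 2 1) (Matrix.single 1 1 1)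
      + ((x 1) * (y 2) * ((x 2) * (y 0))) * hsymB (Matrix.single 2 0 1) (Matrix.single 1 2 1)
      + ((x 1) * (y 2) * ((x 2) * (y 1))) * hsymB (Matrix.single 2 1 1) (Matrix.single 1 2 1)
      + ((x 1) * (y 2) * ((x 2) * (y 2))) * hsymB (Matrix.single 2 2 1) (Matrix.single 1 2 1)
      + ((x 2) * (y 0) * ((x 2) * (y 1))) * hsymB (Matrix.single 2 1 1) (Matrix.single 2 0 1)
      + ((x 2) * (y 0) * ((x 2) * (y 2))) * hsymB (Matrix.single 2 2 1) (Matrix.single 2 0 1)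
      + ((x 2) * (y 1) * ((x 2) * (y 2))) * hsymB (Matrix.single 2 2 1) (Matrix.single 2 1 1)
  have hQg : ∀ x y : Fin 3 → ℝ, Qgen α β γ (outer x y) =
      (x 0)^2*(y 0)^2 + (x 1)^2*(y 1)^2 + (x 2)^2*(y 2)^2 + α*(x 0)^2*(y 1)^2 + β*(x 1)^2*(y 2)^2 + γ*(x 2)^2*(y 0)^2 - 2*(x 0)*(x 1)*(y 0)*(y 1) - 2*(x 0)*(x 2)*(y 0)*(y 2) - 2*(x 1)*(x 2)*(y 1)*(y 2) := by
    intro x y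
    simp only [Qgen, outer]
    ring
  have hz0202 : c 0 2 0 2 = 0 := by
    have l := (h ![1, 0, 0] ![0, 0, 1]).1
    have r := (h ![1, 0, 0] ![0, 0, 1]).2
    rw [hexpand] at l r
    rw [hQg] at r
    simp at l r
    linarith [l, r]
  have hz1010 : c 1 0 1 0 = 0 := by
    have l := (h ![0, 1, 0] ![1, 0, 0]).1
    have r := (h ![0, 1, 0] ![1, 0, 0]).2
    rw [hexpand] at l r
    rw [hQg] at r
    simp at l r
    linarith [l, r]
  have hz2121 : c 2 1 2 1 = 0 := by
    have l := (h ![0, 0, 1] ![0, 1, 0]).1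
    have r := (h ![0, 0, 1] ![0, 1, 0]).2
    rw [hexpand] at l r
    rw [hQg] at r
    simp at l r
    linarith [l, r]
  have hz0002 : c 0 0 0 2 = 0 := by
    have key : (2:ℝ) * c 0 0 0 2 = 0 := by
      apply aux_lin (c 0 0 0 0)
      intro t
      have hx := (h ![1, 0, 0] ![t, 0, 1]).1
      rw [hexpand] at hx
      simp at hx
      linarith [hx, hz0202]
    linarith [key]
  have hz0102 : c 0 1 0 2 = 0 := by
    have key : (2:ℝ) * c 0 1 0 2 = 0 := by
      apply aux_lin (c 0 1 0 1)
      intro t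
      have hx := (h ![1, 0, 0] ![0, t, 1]).1
      rw [hexpand] at hx
      simp at hx
      linarith [hx, hz0202]
    linarith [key]
  have hz0212 : c 0 2 1 2 = 0 := by
    have key : (2:ℝ) * c 0 2 1 2 = 0 := by
      apply aux_lin (c 1 2 1 2)
      intro t
      have hx := (h ![1, t, 0] ![0, 0, 1]).1
      rw [hexpand] at hx
      simp at hx
      linarith [hx, hz0202]
    linarith [key]
  have hz0222 : c 0 2 2 2 = 0 := by
    have key : (2:ℝ) * c 0 2 2 2 = 0 := by
      apply aux_lin (c 2 2 2 2)
      intro t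
      have hx := (h ![1, 0, t] ![0, 0, 1]).1
      rw [hexpand] at hx
      simp at hx
      linarith [hx, hz0202]
    linarith [key]
  have hz1011 : c 1 0 1 1 = 0 := by
    have key : (2:ℝ) * c 1 0 1 1 = 0 := by
      apply aux_lin (c 1 1 1 1)
      intro t
      have hx := (h ![0, 1, 0] ![1, t, 0]).1
      rw [hexpand] at hx
      simp at hx
      linarith [hx, hz1010]
    linarith [key]
  have hz1012 : c 1 0 1 2 = 0 := by
    have key : (2:ℝ) * c 1 0 1 2 = 0 := by
      apply aux_lin (c 1 2 1 2)
      intro t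
      have hx := (h ![0, 1, 0] ![1, 0, t]).1
      rw [hexpand] at hx
      simp at hx
      linarith [hx, hz1010]
    linarith [key]
  have hz0010 : c 0 0 1 0 = 0 := by
    have key : (2:ℝ) * c 0 0 1 0 = 0 := by
      apply aux_lin (c 0 0 0 0)
      intro t
      have hx := (h ![t, 1, 0] ![1, 0, 0]).1
      rw [hexpand] at hx
      simp at hx
      linarith [hx, hz1010]
    linarith [key]
  have hz1020 : c 1 0 2 0 = 0 := by
    have key : (2:ℝ) * c 1 0 2 0 = 0 := by
      apply aux_lin (c 2 0 2 0)
      intro t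
      have hx := (h ![0, 1, t] ![1, 0, 0]).1
      rw [hexpand] at hx
      simp at hx
      linarith [hx, hz1010]
    linarith [key]
  have hz2021 : c 2 0 2 1 = 0 := by
    have key : (2:ℝ) * c 2 0 2 1 = 0 := by
      apply aux_lin (c 2 0 2 0)
      intro t
      have hx := (h ![0, 0, 1] ![t, 1, 0]).1
      rw [hexpand] at hx
      simp at hx
      linarith [hx, hz2121]
    linarith [key]
  have hz2122 : c 2 1 2 2 = 0 := by
    have key : (2:ℝ) * c 2 1 2 2 = 0 := by
      apply aux_lin (c 2 2 2 2)
      intro t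
      have hx := (h ![0, 0, 1] ![0, 1, t]).1
      rw [hexpand] at hx
      simp at hx
      linarith [hx, hz2121]
    linarith [key]
  have hz0121 : c 0 1 2 1 = 0 := by
    have key : (2:ℝ) * c 0 1 2 1 = 0 := by
      apply aux_lin (c 0 1 0 1)
      intro t
      have hx := (h ![t, 0, 1] ![0, 1, 0]).1
      rw [hexpand] at hx
      simp at hx
      linarith [hx, hz2121]
    linarith [key]
  have hz1121 : c 1 1 2 1 = 0 := by
    have key : (2:ℝ) * c 1 1 2 1 = 0 := by
      apply aux_lin (c 1 1 1 1)
      intro t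
      have hx := (h ![0, t, 1] ![0, 1, 0]).1
      rw [hexpand] at hx
      simp at hx
      linarith [hx, hz2121]
    linarith [key]
  have hexpand2 : ∀ x y : Fin 3 → ℝ, Q₁ (outer x y) =
      (c 0 0 0 0)*(x 0)^2*(y 0)^2 + (c 0 1 0 1)*(x 0)^2*(y 1)^2 + (c 1 1 1 1)*(x 1)^2*(y 1)^2 + (c 1 2 1 2)*(x 1)^2*(y 2)^2 + (c 2 0 2 0)*(x 2)^2*(y 0)^2 + (c 2 2 2 2)*(x 2)^2*(y 2)^2 + 2*(c 0 0 0 1)*(x 0)^2*(y 0)*(y 1) + 2*(c 0 0 2 0)*(x 0)*(x 2)*(y 0)^2 + 2*(c 0 1 1 1)*(x 0)*(x 1)*(y 1)^2 + 2*(c 1 1 1 2)*(x 1)^2*(y 1)*(y 2) + 2*(c 1 2 2 2)*(x 1)*(x 2)*(y 2)^2 + 2*(c 2 0 2 2)*(x 2)^2*(y 0)*(y 2) + 2*(c 0 0 1 1)*(x 0)*(x 1)*(y 0)*(y 1) + 2*(c 0 0 1 2)*(x 0)*(x 1)*(y 0)*(y 2) + 2*(c 0 0 2 1)*(x 0)*(x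 2)*(y 0)*(y 1) + 2*(c 0 0 2 2)*(x 0)*(x 2)*(y 0)*(y 2) + 2*(c 0 1 1 0)*(x 0)*(x 1)*(y 0)*(y 1) + 2*(c 0 1 1 2)*(x 0)*(x 1)*(y 1)*(y 2) + 2*(c 0 1 2 0)*(x 0)*(x 2)*(y 0)*(y 1) + 2*(c 0 1 2 2)*(x 0)*(x 2)*(y 1)*(y 2) + 2*(c 0 2 1 0)*(x 0)*(x 1)*(y 0)*(y 2) + 2*(c 0 2 1 1)*(x 0)*(x 1)*(y 1)*(y 2) + 2*(c 0 2 2 0)*(x 0)*(x 2)*(y 0)*(y 2) + 2*(c 0 2 2 1)*(x 0)*(x 2)*(y 1)*(y 2) + 2*(c 1 0 2 1)*(x 1)*(x 2)*(y 0)*(y 1) + 2*(c 1 0 2 2)*(x 1)*(x 2)*(y 0)*(y 2) + 2*(c 1 1 2 0)*(x 1)*(x 2)*(y 0)*(y 1) + 2*(c 1 1 2 2)*(x 1)*(x 2)*(y 1)*(y 2) + 2*(c 1 2 2 0)*(x 1)*(x 2)*(y 0)*(y 2) + 2*(c 1 2 2 1)*(x 1)*(x 2)*(y 1)*(y 2)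 := by
    intro x y
    rw [hexpand]
    linear_combination ((x 0)^2*(y 2)^2) * hz0202
      + (2*(x 0)^2*(y 0)*(y 2)) * hz0002
      + (2*(x 0)^2*(y 1)*(y 2)) * hz0102
      + ((x 1)^2*(y 0)^2) * hz1010
      + (2*(x 1)^2*(y 0)*(y 1)) * hz1011
      + (2*(x 1)^2*(y 0)*(y 2)) * hz1012
      + ((x 2)^2*(y 1)^2) * hz2121
      + (2*(x 2)^2*(y 0)*(y 1)) * hz2021
      + (2*(x 2)^2*(y 1)*(y 2)) * hz2122
      + (2*(x 0)*(x 1)*(y 0)^2) * hz0010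
      + (2*(x 1)*(x 2)*(y 0)^2) * hz1020
      + (2*(x 0)*(x 2)*(y 1)^2) * hz0121
      + (2*(x 1)*(x 2)*(y 1)^2) * hz1121
      + (2*(x 0)*(x 1)*(y 2)^2) * hz0212
      + (2*(x 0)*(x 2)*(y 2)^2) * hz0222
  have hA1 : (c 0 0 0 0) + 2*(c 0 0 2 2) + 2*(c 0 2 2 0) + (c 2 2 2 2) = 0 := by
    have hge : (0:ℝ) ≤ (c 0 0 0 0) + 2*(c 0 0 2 2) + 2*(c 0 2 2 0) + (c 2 2 2 2) := by
      apply aux_quart _ (2*(c 0 0 2 0) + 2*(c 2 0 2 2)) ((c 2 0 2 0))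
      intro t
      have hx := (h ![1, 0, t] ![t, 0, 1]).1
      rw [hexpand2] at hx
      simp at hx
      linarith [hx]
    have hle : (0:ℝ) ≤ -((c 0 0 0 0) + 2*(c 0 0 2 2) + 2*(c 0 2 2 0) + (c 2 2 2 2)) := by
      apply aux_quart _ (-(2*(c 0 0 2 0) + 2*(c 2 0 2 2))) (γ - ((c 2 0 2 0)))
      intro t
      have hx := (h ![1, 0, t] ![t, 0, 1]).2
      rw [hexpand2] at hx
      rw [hQg] at hx
      simp at hx
      linarith [hx]
    linarith [hge, hle]
  have hB1 : 2*(c 0 0 2 0) + 2*(c 2 0 2 2) = 0 := by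
    apply aux_cube _ ((c 2 0 2 0))
    intro t
    have hx := (h ![1, 0, t] ![t, 0, 1]).1
    rw [hexpand2] at hx
    simp at hx
    have hcan : ((c 0 0 0 0) + 2*(c 0 0 2 2) + 2*(c 0 2 2 0) + (c 2 2 2 2)) * t ^ 2 = 0 := by rw [hA1]; ring
    linarith [hx, hcan]
  have hA2 : (c 0 0 0 0) + 2*(c 0 0 1 1) + 2*(c 0 1 1 0) + (c 1 1 1 1) = 0 := by
    have hge : (0:ℝ) ≤ (c 0 0 0 0) + 2*(c 0 0 1 1) + 2*(c 0 1 1 0) + (c 1 1 1 1) := by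
      apply aux_quart _ (2*(c 0 0 0 1) + 2*(c 0 1 1 1)) ((c 0 1 0 1))
      intro t
      have hx := (h ![t, 1, 0] ![1, t, 0]).1
      rw [hexpand2] at hx
      simp at hx
      linarith [hx]
    have hle : (0:ℝ) ≤ -((c 0 0 0 0) + 2*(c 0 0 1 1) + 2*(c 0 1 1 0) + (c 1 1 1 1)) := by
      apply aux_quart _ (-(2*(c 0 0 0 1) + 2*(c 0 1 1 1))) (α - ((c 0 1 0 1)))
      intro t
      have hx := (h ![t, 1, 0] ![1, t, 0]).2
      rw [hexpand2] at hx
      rw [hQg] at hx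
      simp at hx
      linarith [hx]
    linarith [hge, hle]
  have hB2 : 2*(c 0 0 0 1) + 2*(c 0 1 1 1) = 0 := by
    apply aux_cube _ ((c 0 1 0 1))
    intro t
    have hx := (h ![t, 1, 0] ![1, t, 0]).1
    rw [hexpand2] at hx
    simp at hx
    have hcan : ((c 0 0 0 0) + 2*(c 0 0 1 1) + 2*(c 0 1 1 0) + (c 1 1 1 1)) * t ^ 2 = 0 := by rw [hA2]; ring
    linarith [hx, hcan]
  have hA3 : (c 1 1 1 1) + 2*(c 1 1 2 2) + 2*(c 1 2 2 1) + (c 2 2 2 2) = 0 := by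
    have hge : (0:ℝ) ≤ (c 1 1 1 1) + 2*(c 1 1 2 2) + 2*(c 1 2 2 1) + (c 2 2 2 2) := by
      apply aux_quart _ (2*(c 1 1 1 2) + 2*(c 1 2 2 2)) ((c 1 2 1 2))
      intro t
      have hx := (h ![0, t, 1] ![0, 1, t]).1
      rw [hexpand2] at hx
      simp at hx
      linarith [hx]
    have hle : (0:ℝ) ≤ -((c 1 1 1 1) + 2*(c 1 1 2 2) + 2*(c 1 2 2 1) + (c 2 2 2 2)) := by
      apply aux_quart _ (-(2*(c 1 1 1 2) + 2*(c 1 2 2 2))) (β - ((c 1 2 1 2)))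
      intro t
      have hx := (h ![0, t, 1] ![0, 1, t]).2
      rw [hexpand2] at hx
      rw [hQg] at hx
      simp at hx
      linarith [hx]
    linarith [hge, hle]
  have hB3 : 2*(c 1 1 1 2) + 2*(c 1 2 2 2) = 0 := by
    apply aux_cube _ ((c 1 2 1 2))
    intro t
    have hx := (h ![0, t, 1] ![0, 1, t]).1
    rw [hexpand2] at hx
    simp at hx
    have hcan : ((c 1 1 1 1) + 2*(c 1 1 2 2) + 2*(c 1 2 2 1) + (c 2 2 2 2)) * t ^ 2 = 0 := by rw [hA3]; ring
    linarith [hx, hcan]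
  have hQ0pp : α*u^4 + γ*v^2 - 3*u^2*v^2 + β*u^2*v^4 = 0 := by
    linear_combination (-v^2 + α*u^2) * hu2 + (-u^2 + β*u^2*v^2) * hv2 + (u^2*v^2) * habc
  have hVpp : (c 0 1 0 1)*u^4 + (c 2 0 2 0)*v^2 + (c 0 0 0 0)*u^2*v^2 + 2*(c 0 0 0 1)*u^3*v + 2*(c 0 0 1 1)*u^2*v^2 + 2*(c 0 0 1 2)*u^2*v^3 + 2*(c 0 0 2 0)*u*v^2 + 2*(c 0 0 2 1)*u^2*v + 2*(c 0 0 2 2)*u^2*v^2 + 2*(c 0 1 1 0)*u^2*v^2 + 2*(c 0 1 1 1)*u^3*v + 2*(c 0 1 1 2)*u^3*v^2 + 2*(c 0 1 2 0)*u^2*v + 2*(c 0 1 2 2)*u^3*v + 2*(c 0 2 1 0)*u^2*v^3 + 2*(c 0 2 1 1)*u^3*v^2 + 2*(c 0 2 2 0)*u^2*v^2 + 2*(c 0 2 2 1)*u^3*v + 2*(c 1 0 2 1)*u*v^2 + 2*(c 1 0 2 2)*u*v^3 + (c 1 1 1 1)*u^2*v^2 + 2*(c 1 1 1 2)*u^2*v^3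 + 2*(c 1 1 2 0)*u*v^2 + 2*(c 1 1 2 2)*u^2*v^2 + (c 1 2 1 2)*u^2*v^4 + 2*(c 1 2 2 0)*u*v^3 + 2*(c 1 2 2 1)*u^2*v^2 + 2*(c 1 2 2 2)*u^2*v^3 + 2*(c 2 0 2 2)*u*v^2 + (c 2 2 2 2)*u^2*v^2 = 0 := by
    have l := (h ![u, v, 1] ![v, u, u*v]).1
    have r := (h ![u, v, 1] ![v, u, u*v]).2
    rw [hexpand2] at l r
    rw [hQg] at r
    simp at l r
    linarith [l, r, hQ0pp]
  have hQ0pm : α*u^4 + γ*v^2 - 3*u^2*v^2 + β*u^2*v^4 = 0 := by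
    linear_combination (-v^2 + α*u^2) * hu2 + (-u^2 + β*u^2*v^2) * hv2 + (u^2*v^2) * habc
  have hVpm : (c 0 1 0 1)*u^4 + (c 2 0 2 0)*v^2 + (c 0 0 0 0)*u^2*v^2 - 2*(c 0 0 0 1)*u^3*v + 2*(c 0 0 1 1)*u^2*v^2 - 2*(c 0 0 1 2)*u^2*v^3 + 2*(c 0 0 2 0)*u*v^2 - 2*(c 0 0 2 1)*u^2*v + 2*(c 0 0 2 2)*u^2*v^2 + 2*(c 0 1 1 0)*u^2*v^2 - 2*(c 0 1 1 1)*u^3*v + 2*(c 0 1 1 2)*u^3*v^2 - 2*(c 0 1 2 0)*u^2*v - 2*(c 0 1 2 2)*u^3*v - 2*(c 0 2 1 0)*u^2*v^3 + 2*(c 0 2 1 1)*u^3*v^2 + 2*(c 0 2 2 0)*u^2*v^2 - 2*(c 0 2 2 1)*u^3*v + 2*(c 1 0 2 1)*u*v^2 - 2*(c 1 0 2 2)*u*v^3 + (c 1 1 1 1)*u^2*v^2 - 2*(c 1 1 1 2)*u^2*v^3 + 2*(c 1 1 2 0)*u*v^2 + 2*(c 1 1 2 2)*u^2*v^2 + (c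 1 2 1 2)*u^2*v^4 - 2*(c 1 2 2 0)*u*v^3 + 2*(c 1 2 2 1)*u^2*v^2 - 2*(c 1 2 2 2)*u^2*v^3 + 2*(c 2 0 2 2)*u*v^2 + (c 2 2 2 2)*u^2*v^2 = 0 := by
    have l := (h ![u, -v, 1] ![-v, u, -u*v]).1
    have r := (h ![u, -v, 1] ![-v, u, -u*v]).2
    rw [hexpand2] at l r
    rw [hQg] at r
    simp at l r
    linarith [l, r, hQ0pm]
  have hQ0mp : α*u^4 + γ*v^2 - 3*u^2*v^2 + β*u^2*v^4 = 0 := by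
    linear_combination (-v^2 + α*u^2) * hu2 + (-u^2 + β*u^2*v^2) * hv2 + (u^2*v^2) * habc
  have hVmp : (c 0 1 0 1)*u^4 + (c 2 0 2 0)*v^2 + (c 0 0 0 0)*u^2*v^2 - 2*(c 0 0 0 1)*u^3*v + 2*(c 0 0 1 1)*u^2*v^2 + 2*(c 0 0 1 2)*u^2*v^3 - 2*(c 0 0 2 0)*u*v^2 + 2*(c 0 0 2 1)*u^2*v + 2*(c 0 0 2 2)*u^2*v^2 + 2*(c 0 1 1 0)*u^2*v^2 - 2*(c 0 1 1 1)*u^3*v - 2*(c 0 1 1 2)*u^3*v^2 + 2*(c 0 1 2 0)*u^2*v - 2*(c 0 1 2 2)*u^3*v + 2*(c 0 2 1 0)*u^2*v^3 - 2*(c 0 2 1 1)*u^3*v^2 + 2*(c 0 2 2 0)*u^2*v^2 - 2*(c 0 2 2 1)*u^3*v - 2*(c 1 0 2 1)*u*v^2 - 2*(c 1 0 2 2)*u*v^3 + (c 1 1 1 1)*u^2*v^2 + 2*(c 1 1 1 2)*u^2*v^3 - 2*(c 1 1 2 0)*u*v^2 + 2*(c 1 1 2 2)*u^2*v^2 + (c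 1 2 1 2)*u^2*v^4 - 2*(c 1 2 2 0)*u*v^3 + 2*(c 1 2 2 1)*u^2*v^2 + 2*(c 1 2 2 2)*u^2*v^3 - 2*(c 2 0 2 2)*u*v^2 + (c 2 2 2 2)*u^2*v^2 = 0 := by
    have l := (h ![-u, v, 1] ![v, -u, -u*v]).1
    have r := (h ![-u, v, 1] ![v, -u, -u*v]).2
    rw [hexpand2] at l r
    rw [hQg] at r
    simp at l r
    linarith [l, r, hQ0mp]
  have hQ0mm : α*u^4 + γ*v^2 - 3*u^2*v^2 + β*u^2*v^4 = 0 := by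
    linear_combination (-v^2 + α*u^2) * hu2 + (-u^2 + β*u^2*v^2) * hv2 + (u^2*v^2) * habc
  have hVmm : (c 0 1 0 1)*u^4 + (c 2 0 2 0)*v^2 + (c 0 0 0 0)*u^2*v^2 + 2*(c 0 0 0 1)*u^3*v + 2*(c 0 0 1 1)*u^2*v^2 - 2*(c 0 0 1 2)*u^2*v^3 - 2*(c 0 0 2 0)*u*v^2 - 2*(c 0 0 2 1)*u^2*v + 2*(c 0 0 2 2)*u^2*v^2 + 2*(c 0 1 1 0)*u^2*v^2 + 2*(c 0 1 1 1)*u^3*v - 2*(c 0 1 1 2)*u^3*v^2 - 2*(c 0 1 2 0)*u^2*v + 2*(c 0 1 2 2)*u^3*v - 2*(c 0 2 1 0)*u^2*v^3 - 2*(c 0 2 1 1)*u^3*v^2 + 2*(c 0 2 2 0)*u^2*v^2 + 2*(c 0 2 2 1)*u^3*v - 2*(c 1 0 2 1)*u*v^2 + 2*(c 1 0 2 2)*u*v^3 + (c 1 1 1 1)*u^2*v^2 - 2*(c 1 1 1 2)*u^2*v^3 - 2*(c 1 1 2 0)*u*v^2 + 2*(c 1 1 2 2)*u^2*v^2 + (c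 1 2 1 2)*u^2*v^4 + 2*(c 1 2 2 0)*u*v^3 + 2*(c 1 2 2 1)*u^2*v^2 - 2*(c 1 2 2 2)*u^2*v^3 - 2*(c 2 0 2 2)*u*v^2 + (c 2 2 2 2)*u^2*v^2 = 0 := by
    have l := (h ![-u, -v, 1] ![-v, -u, u*v]).1
    have r := (h ![-u, -v, 1] ![-v, -u, u*v]).2
    rw [hexpand2] at l r
    rw [hQg] at r
    simp at l r
    linarith [l, r, hQ0mm]
  have hYpp0 : 2*(c 0 0 0 1)*u^3 + 2*(c 0 0 2 1)*u^2 + 2*(c 0 1 2 0)*u^2 + 2*(c 2 0 2 0)*v + 2*(c 0 0 0 0)*u^2*v + 2*(c 0 0 1 1)*u^2*v + 2*(c 0 0 1 2)*u^2*v^2 + 4*(c 0 0 2 0)*u*v + 2*(c 0 0 2 2)*u^2*v + 2*(c 0 1 1 0)*u^2*v + 2*(c 0 2 1 0)*u^2*v^2 + 2*(c 0 2 2 0)*u^2*v + 2*(c 1 0 2 1)*u*v + 2*(c 1 0 2 2)*u*v^2 + 2*(c 1 1 2 0)*u*v + 2*(c 1 2 2 0)*u*v^2 + 2*(c 2 0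 2 2)*u*v = 0 := by
    apply aux_lin ((c 2 0 2 0) + (c 0 0 0 0)*u^2 + 2*(c 0 0 2 0)*u)
    intro t
    have hx := (h ![u, v, 1] ![t + v, u, u*v]).1
    rw [hexpand2] at hx
    simp at hx
    linarith [hx, hVpp]
  have hYpp1 : 2*(c 0 1 0 1)*u^3 + 2*(c 1 0 2 1)*v^2 + 2*(c 1 1 2 0)*v^2 + 2*(c 0 0 0 1)*u^2*v + 2*(c 0 0 1 1)*u*v^2 + 2*(c 0 0 2 1)*u*v + 2*(c 0 1 1 0)*u*v^2 + 4*(c 0 1 1 1)*u^2*v + 2*(c 0 1 1 2)*u^2*v^2 + 2*(c 0 1 2 0)*u*v + 2*(c 0 1 2 2)*u^2*v + 2*(c 0 2 1 1)*u^2*v^2 + 2*(c 0 2 2 1)*u^2*v + 2*(c 1 1 1 1)*u*v^2 + 2*(c 1 1 1 2)*u*v^3 + 2*(c 1 1 2 2)*u*v^2 + 2*(c 1 2 2 1)*u*v^2 = 0 := by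
    apply aux_lin ((c 0 1 0 1)*u^2 + (c 1 1 1 1)*v^2 + 2*(c 0 1 1 1)*u*v)
    intro t
    have hx := (h ![u, v, 1] ![v, t + u, u*v]).1
    rw [hexpand2] at hx
    simp at hx
    linarith [hx, hVpp]
  have hYpp2 : 2*(c 0 1 2 2)*u^2 + 2*(c 0 2 2 1)*u^2 + 2*(c 1 0 2 2)*v^2 + 2*(c 1 2 2 0)*v^2 + 2*(c 2 0 2 2)*v + 2*(c 0 0 1 2)*u*v^2 + 2*(c 0 0 2 2)*u*v + 2*(c 0 1 1 2)*u^2*v + 2*(c 0 2 1 0)*u*v^2 + 2*(c 0 2 1 1)*u^2*v + 2*(c 0 2 2 0)*u*v + 2*(c 1 1 1 2)*u*v^2 + 2*(c 1 1 2 2)*u*v + 2*(c 1 2 1 2)*u*v^3 + 2*(c 1 2 2 1)*u*v + 4*(c 1 2 2 2)*u*v^2 + 2*(c 2 2 2 2)*u*v = 0 := by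
    apply aux_lin ((c 2 2 2 2) + (c 1 2 1 2)*v^2 + 2*(c 1 2 2 2)*v)
    intro t
    have hx := (h ![u, v, 1] ![v, u, t + u*v]).1
    rw [hexpand2] at hx
    simp at hx
    linarith [hx, hVpp]
  have hXpp0 : 2*(c 0 0 2 0)*v^2 + 2*(c 0 1 0 1)*u^3 + 2*(c 0 0 0 0)*u*v^2 + 4*(c 0 0 0 1)*u^2*v + 2*(c 0 0 1 1)*u*v^2 + 2*(c 0 0 1 2)*u*v^3 + 2*(c 0 0 2 1)*u*v + 2*(c 0 0 2 2)*u*v^2 + 2*(c 0 1 1 0)*u*v^2 + 2*(c 0 1 1 1)*u^2*v + 2*(c 0 1 1 2)*u^2*v^2 + 2*(c 0 1 2 0)*u*v + 2*(c 0 1 2 2)*u^2*v + 2*(c 0 2 1 0)*u*v^3 + 2*(c 0 2 1 1)*u^2*v^2 + 2*(c 0 2 2 0)*u*v^2 + 2*(c 0 2 2 1)*u^2*v = 0 := by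
    apply aux_lin ((c 0 0 0 0)*v^2 + (c 0 1 0 1)*u^2 + 2*(c 0 0 0 1)*u*v)
    intro t
    have hx := (h ![t + u, v, 1] ![v, u, u*v]).1
    rw [hexpand2] at hx
    simp at hx
    linarith [hx, hVpp]
  have hXpp1 : 2*(c 0 1 1 1)*u^3 + 2*(c 0 0 1 1)*u^2*v + 2*(c 0 0 1 2)*u^2*v^2 + 2*(c 0 1 1 0)*u^2*v + 2*(c 0 1 1 2)*u^3*v + 2*(c 0 2 1 0)*u^2*v^2 + 2*(c 0 2 1 1)*u^3*v + 2*(c 1 0 2 1)*u*v + 2*(c 1 0 2 2)*u*v^2 + 2*(c 1 1 1 1)*u^2*v + 4*(c 1 1 1 2)*u^2*v^2 + 2*(c 1 1 2 0)*u*v + 2*(c 1 1 2 2)*u^2*v + 2*(c 1 2 1 2)*u^2*v^3 + 2*(c 1 2 2 0)*u*v^2 + 2*(c 1 2 2 1)*u^2*v + 2*(c 1 2 2 2)*u^2*v^2 = 0 := by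
    apply aux_lin ((c 1 1 1 1)*u^2 + 2*(c 1 1 1 2)*u^2*v + (c 1 2 1 2)*u^2*v^2)
    intro t
    have hx := (h ![u, t + v, 1] ![v, u, u*v]).1
    rw [hexpand2] at hx
    simp at hx
    linarith [hx, hVpp]
  have hXpp2 : 2*(c 2 0 2 0)*v^2 + 2*(c 0 0 2 0)*u*v^2 + 2*(c 0 0 2 1)*u^2*v + 2*(c 0 0 2 2)*u^2*v^2 + 2*(c 0 1 2 0)*u^2*v + 2*(c 0 1 2 2)*u^3*v + 2*(c 0 2 2 0)*u^2*v^2 + 2*(c 0 2 2 1)*u^3*v + 2*(c 1 0 2 1)*u*v^2 + 2*(c 1 0 2 2)*u*v^3 + 2*(c 1 1 2 0)*u*v^2 + 2*(c 1 1 2 2)*u^2*v^2 + 2*(c 1 2 2 0)*u*v^3 + 2*(c 1 2 2 1)*u^2*v^2 + 2*(c 1 2 2 2)*u^2*v^3 + 4*(c 2 0 2 2)*u*v^2 + 2*(c 2 2 2 2)*u^2*v^2 = 0 := by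
    apply aux_lin ((c 2 0 2 0)*v^2 + 2*(c 2 0 2 2)*u*v^2 + (c 2 2 2 2)*u^2*v^2)
    intro t
    have hx := (h ![u, v, 1 + t] ![v, u, u*v]).1
    rw [hexpand2] at hx
    simp at hx
    linarith [hx, hVpp]
  have hYpm0 : 2*(c 0 0 0 1)*u^3 + 2*(c 0 0 2 1)*u^2 + 2*(c 0 1 2 0)*u^2 - 2*(c 2 0 2 0)*v - 2*(c 0 0 0 0)*u^2*v - 2*(c 0 0 1 1)*u^2*v + 2*(c 0 0 1 2)*u^2*v^2 - 4*(c 0 0 2 0)*u*v - 2*(c 0 0 2 2)*u^2*v - 2*(c 0 1 1 0)*u^2*v + 2*(c 0 2 1 0)*u^2*v^2 - 2*(c 0 2 2 0)*u^2*v - 2*(c 1 0 2 1)*u*v + 2*(c 1 0 2 2)*u*v^2 - 2*(c 1 1 2 0)*u*v + 2*(c 1 2 2 0)*u*v^2 - 2*(c 2 0 2 2)*u*v = 0 := by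
    apply aux_lin ((c 2 0 2 0) + (c 0 0 0 0)*u^2 + 2*(c 0 0 2 0)*u)
    intro t
    have hx := (h ![u, -v, 1] ![t - v, u, -u*v]).1
    rw [hexpand2] at hx
    simp at hx
    linarith [hx, hVpm]
  have hYpm1 : 2*(c 0 1 0 1)*u^3 + 2*(c 1 0 2 1)*v^2 + 2*(c 1 1 2 0)*v^2 - 2*(c 0 0 0 1)*u^2*v + 2*(c 0 0 1 1)*u*v^2 - 2*(c 0 0 2 1)*u*v + 2*(c 0 1 1 0)*u*v^2 - 4*(c 0 1 1 1)*u^2*v + 2*(c 0 1 1 2)*u^2*v^2 - 2*(c 0 1 2 0)*u*v - 2*(c 0 1 2 2)*u^2*v + 2*(c 0 2 1 1)*u^2*v^2 - 2*(c 0 2 2 1)*u^2*v + 2*(c 1 1 1 1)*u*v^2 - 2*(c 1 1 1 2)*u*v^3 + 2*(c 1 1 2 2)*u*v^2 + 2*(c 1 2 2 1)*u*v^2 = 0 := by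
    apply aux_lin ((c 0 1 0 1)*u^2 + (c 1 1 1 1)*v^2 - 2*(c 0 1 1 1)*u*v)
    intro t
    have hx := (h ![u, -v, 1] ![-v, t + u, -u*v]).1
    rw [hexpand2] at hx
    simp at hx
    linarith [hx, hVpm]
  have hYpm2 : 2*(c 0 1 2 2)*u^2 + 2*(c 0 2 2 1)*u^2 + 2*(c 1 0 2 2)*v^2 + 2*(c 1 2 2 0)*v^2 - 2*(c 2 0 2 2)*v + 2*(c 0 0 1 2)*u*v^2 - 2*(c 0 0 2 2)*u*v - 2*(c 0 1 1 2)*u^2*v + 2*(c 0 2 1 0)*u*v^2 - 2*(c 0 2 1 1)*u^2*v - 2*(c 0 2 2 0)*u*v + 2*(c 1 1 1 2)*u*v^2 - 2*(c 1 1 2 2)*u*v - 2*(c 1 2 1 2)*u*v^3 - 2*(c 1 2 2 1)*u*v + 4*(c 1 2 2 2)*u*v^2 - 2*(c 2 2 2 2)*u*v = 0 := by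
    apply aux_lin ((c 2 2 2 2) + (c 1 2 1 2)*v^2 - 2*(c 1 2 2 2)*v)
    intro t
    have hx := (h ![u, -v, 1] ![-v, u, t - u*v]).1
    rw [hexpand2] at hx
    simp at hx
    linarith [hx, hVpm]
  have hXpm0 : 2*(c 0 0 2 0)*v^2 + 2*(c 0 1 0 1)*u^3 + 2*(c 0 0 0 0)*u*v^2 - 4*(c 0 0 0 1)*u^2*v + 2*(c 0 0 1 1)*u*v^2 - 2*(c 0 0 1 2)*u*v^3 - 2*(c 0 0 2 1)*u*v + 2*(c 0 0 2 2)*u*v^2 + 2*(c 0 1 1 0)*u*v^2 - 2*(c 0 1 1 1)*u^2*v + 2*(c 0 1 1 2)*u^2*v^2 - 2*(c 0 1 2 0)*u*v - 2*(c 0 1 2 2)*u^2*v - 2*(c 0 2 1 0)*u*v^3 + 2*(c 0 2 1 1)*u^2*v^2 + 2*(c 0 2 2 0)*u*v^2 - 2*(c 0 2 2 1)*u^2*v = 0 := by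
    apply aux_lin ((c 0 0 0 0)*v^2 + (c 0 1 0 1)*u^2 - 2*(c 0 0 0 1)*u*v)
    intro t
    have hx := (h ![t + u, -v, 1] ![-v, u, -u*v]).1
    rw [hexpand2] at hx
    simp at hx
    linarith [hx, hVpm]
  have hXpm1 : 2*(c 0 1 1 1)*u^3 - 2*(c 0 0 1 1)*u^2*v + 2*(c 0 0 1 2)*u^2*v^2 - 2*(c 0 1 1 0)*u^2*v - 2*(c 0 1 1 2)*u^3*v + 2*(c 0 2 1 0)*u^2*v^2 - 2*(c 0 2 1 1)*u^3*v - 2*(c 1 0 2 1)*u*v + 2*(c 1 0 2 2)*u*v^2 - 2*(c 1 1 1 1)*u^2*v + 4*(c 1 1 1 2)*u^2*v^2 - 2*(c 1 1 2 0)*u*v - 2*(c 1 1 2 2)*u^2*v - 2*(c 1 2 1 2)*u^2*v^3 + 2*(c 1 2 2 0)*u*v^2 - 2*(c 1 2 2 1)*u^2*v + 2*(c 1 2 2 2)*u^2*v^2 = 0 := by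
    apply aux_lin ((c 1 1 1 1)*u^2 - 2*(c 1 1 1 2)*u^2*v + (c 1 2 1 2)*u^2*v^2)
    intro t
    have hx := (h ![u, t - v, 1] ![-v, u, -u*v]).1
    rw [hexpand2] at hx
    simp at hx
    linarith [hx, hVpm]
  have hXpm2 : 2*(c 2 0 2 0)*v^2 + 2*(c 0 0 2 0)*u*v^2 - 2*(c 0 0 2 1)*u^2*v + 2*(c 0 0 2 2)*u^2*v^2 - 2*(c 0 1 2 0)*u^2*v - 2*(c 0 1 2 2)*u^3*v + 2*(c 0 2 2 0)*u^2*v^2 - 2*(c 0 2 2 1)*u^3*v + 2*(c 1 0 2 1)*u*v^2 - 2*(c 1 0 2 2)*u*v^3 + 2*(c 1 1 2 0)*u*v^2 + 2*(c 1 1 2 2)*u^2*v^2 - 2*(c 1 2 2 0)*u*v^3 + 2*(c 1 2 2 1)*u^2*v^2 - 2*(c 1 2 2 2)*u^2*v^3 + 4*(c 2 0 2 2)*u*v^2 + 2*(c 2 2 2 2)*u^2*v^2 = 0 := by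
    apply aux_lin ((c 2 0 2 0)*v^2 + 2*(c 2 0 2 2)*u*v^2 + (c 2 2 2 2)*u^2*v^2)
    intro t
    have hx := (h ![u, -v, 1 + t] ![-v, u, -u*v]).1
    rw [hexpand2] at hx
    simp at hx
    linarith [hx, hVpm]
  have hYmp0 : -2*(c 0 0 0 1)*u^3 + 2*(c 0 0 2 1)*u^2 + 2*(c 0 1 2 0)*u^2 + 2*(c 2 0 2 0)*v + 2*(c 0 0 0 0)*u^2*v + 2*(c 0 0 1 1)*u^2*v + 2*(c 0 0 1 2)*u^2*v^2 - 4*(c 0 0 2 0)*u*v + 2*(c 0 0 2 2)*u^2*v + 2*(c 0 1 1 0)*u^2*v + 2*(c 0 2 1 0)*u^2*v^2 + 2*(c 0 2 2 0)*u^2*v - 2*(c 1 0 2 1)*u*v - 2*(c 1 0 2 2)*u*v^2 - 2*(c 1 1 2 0)*u*v - 2*(c 1 2 2 0)*u*v^2 - 2*(c 2 0 2 2)*u*v = 0 := by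
    apply aux_lin ((c 2 0 2 0) + (c 0 0 0 0)*u^2 - 2*(c 0 0 2 0)*u)
    intro t
    have hx := (h ![-u, v, 1] ![t + v, -u, -u*v]).1
    rw [hexpand2] at hx
    simp at hx
    linarith [hx, hVmp]
  have hYmp1 : -2*(c 0 1 0 1)*u^3 + 2*(c 1 0 2 1)*v^2 + 2*(c 1 1 2 0)*v^2 + 2*(c 0 0 0 1)*u^2*v - 2*(c 0 0 1 1)*u*v^2 - 2*(c 0 0 2 1)*u*v - 2*(c 0 1 1 0)*u*v^2 + 4*(c 0 1 1 1)*u^2*v + 2*(c 0 1 1 2)*u^2*v^2 - 2*(c 0 1 2 0)*u*v + 2*(c 0 1 2 2)*u^2*v + 2*(c 0 2 1 1)*u^2*v^2 + 2*(c 0 2 2 1)*u^2*v - 2*(c 1 1 1 1)*u*v^2 - 2*(c 1 1 1 2)*u*v^3 - 2*(c 1 1 2 2)*u*v^2 - 2*(c 1 2 2 1)*u*v^2 = 0 := by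
    apply aux_lin ((c 0 1 0 1)*u^2 + (c 1 1 1 1)*v^2 - 2*(c 0 1 1 1)*u*v)
    intro t
    have hx := (h ![-u, v, 1] ![v, t - u, -u*v]).1
    rw [hexpand2] at hx
    simp at hx
    linarith [hx, hVmp]
  have hYmp2 : 2*(c 0 1 2 2)*u^2 + 2*(c 0 2 2 1)*u^2 + 2*(c 1 0 2 2)*v^2 + 2*(c 1 2 2 0)*v^2 + 2*(c 2 0 2 2)*v - 2*(c 0 0 1 2)*u*v^2 - 2*(c 0 0 2 2)*u*v + 2*(c 0 1 1 2)*u^2*v - 2*(c 0 2 1 0)*u*v^2 + 2*(c 0 2 1 1)*u^2*v - 2*(c 0 2 2 0)*u*v - 2*(c 1 1 1 2)*u*v^2 - 2*(c 1 1 2 2)*u*v - 2*(c 1 2 1 2)*u*v^3 - 2*(c 1 2 2 1)*u*v - 4*(c 1 2 2 2)*u*v^2 - 2*(c 2 2 2 2)*u*v = 0 := by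
    apply aux_lin ((c 2 2 2 2) + (c 1 2 1 2)*v^2 + 2*(c 1 2 2 2)*v)
    intro t
    have hx := (h ![-u, v, 1] ![v, -u, t - u*v]).1
    rw [hexpand2] at hx
    simp at hx
    linarith [hx, hVmp]
  have hXmp0 : 2*(c 0 0 2 0)*v^2 - 2*(c 0 1 0 1)*u^3 - 2*(c 0 0 0 0)*u*v^2 + 4*(c 0 0 0 1)*u^2*v - 2*(c 0 0 1 1)*u*v^2 - 2*(c 0 0 1 2)*u*v^3 - 2*(c 0 0 2 1)*u*v - 2*(c 0 0 2 2)*u*v^2 - 2*(c 0 1 1 0)*u*v^2 + 2*(c 0 1 1 1)*u^2*v + 2*(c 0 1 1 2)*u^2*v^2 - 2*(c 0 1 2 0)*u*v + 2*(c 0 1 2 2)*u^2*v - 2*(c 0 2 1 0)*u*v^3 + 2*(c 0 2 1 1)*u^2*v^2 - 2*(c 0 2 2 0)*u*v^2 + 2*(c 0 2 2 1)*u^2*v = 0 := by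
    apply aux_lin ((c 0 0 0 0)*v^2 + (c 0 1 0 1)*u^2 - 2*(c 0 0 0 1)*u*v)
    intro t
    have hx := (h ![t - u, v, 1] ![v, -u, -u*v]).1
    rw [hexpand2] at hx
    simp at hx
    linarith [hx, hVmp]
  have hXmp1 : -2*(c 0 1 1 1)*u^3 + 2*(c 0 0 1 1)*u^2*v + 2*(c 0 0 1 2)*u^2*v^2 + 2*(c 0 1 1 0)*u^2*v - 2*(c 0 1 1 2)*u^3*v + 2*(c 0 2 1 0)*u^2*v^2 - 2*(c 0 2 1 1)*u^3*v - 2*(c 1 0 2 1)*u*v - 2*(c 1 0 2 2)*u*v^2 + 2*(c 1 1 1 1)*u^2*v + 4*(c 1 1 1 2)*u^2*v^2 - 2*(c 1 1 2 0)*u*v + 2*(c 1 1 2 2)*u^2*v + 2*(c 1 2 1 2)*u^2*v^3 - 2*(c 1 2 2 0)*u*v^2 + 2*(c 1 2 2 1)*u^2*v + 2*(c 1 2 2 2)*u^2*v^2 = 0 := by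
    apply aux_lin ((c 1 1 1 1)*u^2 + 2*(c 1 1 1 2)*u^2*v + (c 1 2 1 2)*u^2*v^2)
    intro t
    have hx := (h ![-u, t + v, 1] ![v, -u, -u*v]).1
    rw [hexpand2] at hx
    simp at hx
    linarith [hx, hVmp]
  have hXmp2 : 2*(c 2 0 2 0)*v^2 - 2*(c 0 0 2 0)*u*v^2 + 2*(c 0 0 2 1)*u^2*v + 2*(c 0 0 2 2)*u^2*v^2 + 2*(c 0 1 2 0)*u^2*v - 2*(c 0 1 2 2)*u^3*v + 2*(c 0 2 2 0)*u^2*v^2 - 2*(c 0 2 2 1)*u^3*v - 2*(c 1 0 2 1)*u*v^2 - 2*(c 1 0 2 2)*u*v^3 - 2*(c 1 1 2 0)*u*v^2 + 2*(c 1 1 2 2)*u^2*v^2 - 2*(c 1 2 2 0)*u*v^3 + 2*(c 1 2 2 1)*u^2*v^2 + 2*(c 1 2 2 2)*u^2*v^3 - 4*(c 2 0 2 2)*u*v^2 + 2*(c 2 2 2 2)*u^2*v^2 = 0 := by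
    apply aux_lin ((c 2 0 2 0)*v^2 - 2*(c 2 0 2 2)*u*v^2 + (c 2 2 2 2)*u^2*v^2)
    intro t
    have hx := (h ![-u, v, 1 + t] ![v, -u, -u*v]).1
    rw [hexpand2] at hx
    simp at hx
    linarith [hx, hVmp]
  have hYmm0 : -2*(c 0 0 0 1)*u^3 + 2*(c 0 0 2 1)*u^2 + 2*(c 0 1 2 0)*u^2 - 2*(c 2 0 2 0)*v - 2*(c 0 0 0 0)*u^2*v - 2*(c 0 0 1 1)*u^2*v + 2*(c 0 0 1 2)*u^2*v^2 + 4*(c 0 0 2 0)*u*v - 2*(c 0 0 2 2)*u^2*v - 2*(c 0 1 1 0)*u^2*v + 2*(c 0 2 1 0)*u^2*v^2 - 2*(c 0 2 2 0)*u^2*v + 2*(c 1 0 2 1)*u*v - 2*(c 1 0 2 2)*u*v^2 + 2*(c 1 1 2 0)*u*v - 2*(c 1 2 2 0)*u*v^2 + 2*(c 2 0 2 2)*u*v = 0 := by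
    apply aux_lin ((c 2 0 2 0) + (c 0 0 0 0)*u^2 - 2*(c 0 0 2 0)*u)
    intro t
    have hx := (h ![-u, -v, 1] ![t - v, -u, u*v]).1
    rw [hexpand2] at hx
    simp at hx
    linarith [hx, hVmm]
  have hYmm1 : -2*(c 0 1 0 1)*u^3 + 2*(c 1 0 2 1)*v^2 + 2*(c 1 1 2 0)*v^2 - 2*(c 0 0 0 1)*u^2*v - 2*(c 0 0 1 1)*u*v^2 + 2*(c 0 0 2 1)*u*v - 2*(c 0 1 1 0)*u*v^2 - 4*(c 0 1 1 1)*u^2*v + 2*(c 0 1 1 2)*u^2*v^2 + 2*(c 0 1 2 0)*u*v - 2*(c 0 1 2 2)*u^2*v + 2*(c 0 2 1 1)*u^2*v^2 - 2*(c 0 2 2 1)*u^2*v - 2*(c 1 1 1 1)*u*v^2 + 2*(c 1 1 1 2)*u*v^3 - 2*(c 1 1 2 2)*u*v^2 - 2*(c 1 2 2 1)*u*v^2 = 0 := by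
    apply aux_lin ((c 0 1 0 1)*u^2 + (c 1 1 1 1)*v^2 + 2*(c 0 1 1 1)*u*v)
    intro t
    have hx := (h ![-u, -v, 1] ![-v, t - u, u*v]).1
    rw [hexpand2] at hx
    simp at hx
    linarith [hx, hVmm]
  have hYmm2 : 2*(c 0 1 2 2)*u^2 + 2*(c 0 2 2 1)*u^2 + 2*(c 1 0 2 2)*v^2 + 2*(c 1 2 2 0)*v^2 - 2*(c 2 0 2 2)*v - 2*(c 0 0 1 2)*u*v^2 + 2*(c 0 0 2 2)*u*v - 2*(c 0 1 1 2)*u^2*v - 2*(c 0 2 1 0)*u*v^2 - 2*(c 0 2 1 1)*u^2*v + 2*(c 0 2 2 0)*u*v - 2*(c 1 1 1 2)*u*v^2 + 2*(c 1 1 2 2)*u*v + 2*(c 1 2 1 2)*u*v^3 + 2*(c 1 2 2 1)*u*v - 4*(c 1 2 2 2)*u*v^2 + 2*(c 2 2 2 2)*u*v = 0 := by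
    apply aux_lin ((c 2 2 2 2) + (c 1 2 1 2)*v^2 - 2*(c 1 2 2 2)*v)
    intro t
    have hx := (h ![-u, -v, 1] ![-v, -u, t + u*v]).1
    rw [hexpand2] at hx
    simp at hx
    linarith [hx, hVmm]
  have hXmm0 : 2*(c 0 0 2 0)*v^2 - 2*(c 0 1 0 1)*u^3 - 2*(c 0 0 0 0)*u*v^2 - 4*(c 0 0 0 1)*u^2*v - 2*(c 0 0 1 1)*u*v^2 + 2*(c 0 0 1 2)*u*v^3 + 2*(c 0 0 2 1)*u*v - 2*(c 0 0 2 2)*u*v^2 - 2*(c 0 1 1 0)*u*v^2 - 2*(c 0 1 1 1)*u^2*v + 2*(c 0 1 1 2)*u^2*v^2 + 2*(c 0 1 2 0)*u*v - 2*(c 0 1 2 2)*u^2*v + 2*(c 0 2 1 0)*u*v^3 + 2*(c 0 2 1 1)*u^2*v^2 - 2*(c 0 2 2 0)*u*v^2 - 2*(c 0 2 2 1)*u^2*v = 0 := by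
    apply aux_lin ((c 0 0 0 0)*v^2 + (c 0 1 0 1)*u^2 + 2*(c 0 0 0 1)*u*v)
    intro t
    have hx := (h ![t - u, -v, 1] ![-v, -u, u*v]).1
    rw [hexpand2] at hx
    simp at hx
    linarith [hx, hVmm]
  have hXmm1 : -2*(c 0 1 1 1)*u^3 - 2*(c 0 0 1 1)*u^2*v + 2*(c 0 0 1 2)*u^2*v^2 - 2*(c 0 1 1 0)*u^2*v + 2*(c 0 1 1 2)*u^3*v + 2*(c 0 2 1 0)*u^2*v^2 + 2*(c 0 2 1 1)*u^3*v + 2*(c 1 0 2 1)*u*v - 2*(c 1 0 2 2)*u*v^2 - 2*(c 1 1 1 1)*u^2*v + 4*(c 1 1 1 2)*u^2*v^2 + 2*(c 1 1 2 0)*u*v - 2*(c 1 1 2 2)*u^2*v - 2*(c 1 2 1 2)*u^2*v^3 - 2*(c 1 2 2 0)*u*v^2 - 2*(c 1 2 2 1)*u^2*v + 2*(c 1 2 2 2)*u^2*v^2 = 0 := by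
    apply aux_lin ((c 1 1 1 1)*u^2 - 2*(c 1 1 1 2)*u^2*v + (c 1 2 1 2)*u^2*v^2)
    intro t
    have hx := (h ![-u, t - v, 1] ![-v, -u, u*v]).1
    rw [hexpand2] at hx
    simp at hx
    linarith [hx, hVmm]
  have hXmm2 : 2*(c 2 0 2 0)*v^2 - 2*(c 0 0 2 0)*u*v^2 - 2*(c 0 0 2 1)*u^2*v + 2*(c 0 0 2 2)*u^2*v^2 - 2*(c 0 1 2 0)*u^2*v + 2*(c 0 1 2 2)*u^3*v + 2*(c 0 2 2 0)*u^2*v^2 + 2*(c 0 2 2 1)*u^3*v - 2*(c 1 0 2 1)*u*v^2 + 2*(c 1 0 2 2)*u*v^3 - 2*(c 1 1 2 0)*u*v^2 + 2*(c 1 1 2 2)*u^2*v^2 + 2*(c 1 2 2 0)*u*v^3 + 2*(c 1 2 2 1)*u^2*v^2 - 2*(c 1 2 2 2)*u^2*v^3 - 4*(c 2 0 2 2)*u*v^2 + 2*(c 2 2 2 2)*u^2*v^2 = 0 := by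
    apply aux_lin ((c 2 0 2 0)*v^2 - 2*(c 2 0 2 2)*u*v^2 + (c 2 2 2 2)*u^2*v^2)
    intro t
    have hx := (h ![-u, -v, 1 + t] ![-v, -u, u*v]).1
    rw [hexpand2] at hx
    simp at hx
    linarith [hx, hVmm]
  have hT1 : 2*(c 0 0 1 2)*u*v^2 + 2*(c 0 2 1 0)*u*v^2 - 2*(c 1 1 1 2)*u*v^2 = 0 := by
    linear_combination ((1/4)) * hYpp2 + ((1/4)) * hYpm2 + ((-1/4)) * hYmp2 + ((-1/4)) * hYmm2 + (-2*u*v^2) * hB3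
  have hT2 : 2*(c 0 0 1 2)*u^2*v^2 + 2*(c 0 2 1 0)*u^2*v^2 + 2*(c 1 1 1 2)*u^2*v^2 = 0 := by
    linear_combination ((1/4)) * hXpp1 + ((1/4)) * hXpm1 + ((1/4)) * hXmp1 + ((1/4)) * hXmm1 + (-u^2*v^2) * hB3
  have hE1m : (u*v^2) * (2*(c 0 0 1 2) + 2*(c 0 2 1 0) - 2*(c 1 1 1 2)) = 0 := by
    linear_combination (1) * hT1
  have hE1 : 2*(c 0 0 1 2) + 2*(c 0 2 1 0) - 2*(c 1 1 1 2) = 0 :=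
    aux_cancel _ _ (mul_pos (hu0) (pow_pos hv0 2)) hE1m
  have hE2m : (u^2*v^2) * (2*(c 0 0 1 2) + 2*(c 0 2 1 0) + 2*(c 1 1 1 2)) = 0 := by
    linear_combination (1) * hT2
  have hE2 : 2*(c 0 0 1 2) + 2*(c 0 2 1 0) + 2*(c 1 1 1 2) = 0 :=
    aux_cancel _ _ (mul_pos (pow_pos hu0 2) (pow_pos hv0 2)) hE2m
  have hM1 : 2*(c 0 0 1 2) + 2*(c 0 2 1 0) = 0 := by linear_combination ((1/2)) * hE1 + ((1/2)) * hE2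
  have hW3 : 2*(c 1 1 1 2) = 0 := by linear_combination ((-1/2)) * hE1 + ((1/2)) * hE2
  have hT3 : 2*(c 0 0 2 0)*u*v + 2*(c 1 0 2 1)*u*v + 2*(c 1 1 2 0)*u*v = 0 := by
    linear_combination ((1/4)) * hYpp0 + ((-1/4)) * hYpm0 + ((-1/4)) * hYmp0 + ((1/4)) * hYmm0 + (-u*v) * hB1
  have hT4 : -2*(c 0 0 2 0)*u*v^2 + 2*(c 1 0 2 1)*u*v^2 + 2*(c 1 1 2 0)*u*v^2 = 0 := by
    linear_combination ((1/4)) * hXpp2 + ((1/4)) * hXpm2 + ((-1/4)) * hXmp2 + ((-1/4)) * hXmm2 + (-2*u*v^2) * hB1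
  have hE3m : (u*v) * (2*(c 0 0 2 0) + 2*(c 1 0 2 1) + 2*(c 1 1 2 0)) = 0 := by
    linear_combination (1) * hT3
  have hE3 : 2*(c 0 0 2 0) + 2*(c 1 0 2 1) + 2*(c 1 1 2 0) = 0 :=
    aux_cancel _ _ (mul_pos (hu0) (hv0)) hE3m
  have hE4m : (u*v^2) * (-2*(c 0 0 2 0) + 2*(c 1 0 2 1) + 2*(c 1 1 2 0)) = 0 := by
    linear_combination (1) * hT4
  have hE4 : -2*(c 0 0 2 0) + 2*(c 1 0 2 1) + 2*(c 1 1 2 0) = 0 :=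
    aux_cancel _ _ (mul_pos (hu0) (pow_pos hv0 2)) hE4m
  have hM3 : 2*(c 1 0 2 1) + 2*(c 1 1 2 0) = 0 := by linear_combination ((1/2)) * hE3 + ((1/2)) * hE4
  have hW5 : 2*(c 0 0 2 0) = 0 := by linear_combination ((1/2)) * hE3 + ((-1/2)) * hE4
  have hT5 : -2*(c 0 0 0 1)*u^2*v + 2*(c 0 1 2 2)*u^2*v + 2*(c 0 2 2 1)*u^2*v = 0 := by
    linear_combination ((1/4)) * hYpp1 + ((-1/4)) * hYpm1 + ((1/4)) * hYmp1 + ((-1/4)) * hYmm1 + (-2*u^2*v) * hB2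
  have hT6 : 2*(c 0 0 0 1)*u^2*v + 2*(c 0 1 2 2)*u^2*v + 2*(c 0 2 2 1)*u^2*v = 0 := by
    linear_combination ((1/4)) * hXpp0 + ((-1/4)) * hXpm0 + ((1/4)) * hXmp0 + ((-1/4)) * hXmm0 + (-u^2*v) * hB2
  have hE5m : (u^2*v) * (-2*(c 0 0 0 1) + 2*(c 0 1 2 2) + 2*(c 0 2 2 1)) = 0 := by
    linear_combination (1) * hT5
  have hE5 : -2*(c 0 0 0 1) + 2*(c 0 1 2 2) + 2*(c 0 2 2 1) = 0 :=
    aux_cancel _ _ (mul_pos (pow_pos hu0 2) (hv0)) hE5m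
  have hE6m : (u^2*v) * (2*(c 0 0 0 1) + 2*(c 0 1 2 2) + 2*(c 0 2 2 1)) = 0 := by
    linear_combination (1) * hT6
  have hE6 : 2*(c 0 0 0 1) + 2*(c 0 1 2 2) + 2*(c 0 2 2 1) = 0 :=
    aux_cancel _ _ (mul_pos (pow_pos hu0 2) (hv0)) hE6m
  have hM6 : 2*(c 0 1 2 2) + 2*(c 0 2 2 1) = 0 := by linear_combination ((1/2)) * hE5 + ((1/2)) * hE6
  have hW1 : 2*(c 0 0 0 1) = 0 := by linear_combination ((-1/2)) * hE5 + ((1/2)) * hE6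
  have hT7 : 2*(c 0 0 1 2)*u^2*v^3 + 2*(c 0 0 2 1)*u^2*v + 2*(c 0 1 2 0)*u^2*v + 2*(c 0 2 1 0)*u^2*v^3 = 0 := by
    linear_combination ((1/4)) * hVpp + ((-1/4)) * hVpm + ((1/4)) * hVmp + ((-1/4)) * hVmm + (-u^2*v^3) * hB3
  have hE7m : (u^2*v) * (2*(c 0 0 2 1) + 2*(c 0 1 2 0) + 2*(c 0 0 1 2)*v^2 + 2*(c 0 2 1 0)*v^2) = 0 := by
    linear_combination (1) * hT7
  have hE7 : 2*(c 0 0 2 1) + 2*(c 0 1 2 0) + 2*(c 0 0 1 2)*v^2 + 2*(c 0 2 1 0)*v^2 = 0 :=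
    aux_cancel _ _ (mul_pos (pow_pos hu0 2) (hv0)) hE7m
  have hM5 : 2*(c 0 0 2 1) + 2*(c 0 1 2 0) = 0 := by linear_combination (1) * hE7 + (-v^2) * hM1
  have hT8 : 2*(c 0 1 1 2)*u^3*v^2 + 2*(c 0 2 1 1)*u^3*v^2 + 2*(c 1 0 2 1)*u*v^2 + 2*(c 1 1 2 0)*u*v^2 = 0 := by
    linear_combination ((1/4)) * hVpp + ((1/4)) * hVpm + ((-1/4)) * hVmp + ((-1/4)) * hVmm + (-u*v^2) * hB1
  have hE8m : (u*v^2) * (2*(c 1 0 2 1) + 2*(c 1 1 2 0) + 2*(c 0 1 1 2)*u^2 + 2*(c 0 2 1 1)*u^2) = 0 := by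
    linear_combination (1) * hT8
  have hE8 : 2*(c 1 0 2 1) + 2*(c 1 1 2 0) + 2*(c 0 1 1 2)*u^2 + 2*(c 0 2 1 1)*u^2 = 0 :=
    aux_cancel _ _ (mul_pos (hu0) (pow_pos hv0 2)) hE8m
  have hM2m : (u^2) * (2*(c 0 1 1 2) + 2*(c 0 2 1 1)) = 0 := by linear_combination (1) * hE8 + (-1) * hM3
  have hM2 : 2*(c 0 1 1 2) + 2*(c 0 2 1 1) = 0 := aux_cancel _ _ (pow_pos hu0 2) hM2m
  have hT9 : 2*(c 0 0 0 1)*u^3 + 2*(c 1 0 2 2)*u*v^2 + 2*(c 1 2 2 0)*u*v^2 = 0 := by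
    linear_combination ((1/4)) * hYpp0 + ((1/4)) * hYpm0 + ((-1/4)) * hYmp0 + ((-1/4)) * hYmm0
  have hE9m : (u) * (2*(c 0 0 0 1)*u^2 + 2*(c 1 0 2 2)*v^2 + 2*(c 1 2 2 0)*v^2) = 0 := by
    linear_combination (1) * hT9
  have hE9 : 2*(c 0 0 0 1)*u^2 + 2*(c 1 0 2 2)*v^2 + 2*(c 1 2 2 0)*v^2 = 0 :=
    aux_cancel _ _ (hu0) hE9m
  have hM4m : (v^2) * (2*(c 1 0 2 2) + 2*(c 1 2 2 0)) = 0 := by linear_combination (1) * hE9 + (-u^2) * hW1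
  have hM4 : 2*(c 1 0 2 2) + 2*(c 1 2 2 0) = 0 := aux_cancel _ _ (pow_pos hv0 2) hM4m
  have hT10 : 2*(c 2 0 2 0)*v - (c 1 1 1 1)*u^2*v - (c 2 2 2 2)*u^2*v = 0 := by
    linear_combination ((1/4)) * hYpp0 + ((-1/4)) * hYpm0 + ((1/4)) * hYmp0 + ((-1/4)) * hYmm0 + (-u^2*v) * hA2 + (-u^2*v) * hA1
  have hT11 : 2*(c 2 0 2 0)*v^2 - (c 0 0 0 0)*u^2*v^2 - (c 1 1 1 1)*u^2*v^2 = 0 := by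
    linear_combination ((1/4)) * hXpp2 + ((1/4)) * hXpm2 + ((1/4)) * hXmp2 + ((1/4)) * hXmm2 + (-u^2*v^2) * hA1 + (-u^2*v^2) * hA3
  have hE10m : (v) * (2*(c 2 0 2 0) - (c 1 1 1 1)*u^2 - (c 2 2 2 2)*u^2) = 0 := by
    linear_combination (1) * hT10
  have hE10 : 2*(c 2 0 2 0) - (c 1 1 1 1)*u^2 - (c 2 2 2 2)*u^2 = 0 :=
    aux_cancel _ _ (hv0) hE10m
  have hE11m : (v^2) * (2*(c 2 0 2 0) - (c 0 0 0 0)*u^2 - (c 1 1 1 1)*u^2) = 0 := by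
    linear_combination (1) * hT11
  have hE11 : 2*(c 2 0 2 0) - (c 0 0 0 0)*u^2 - (c 1 1 1 1)*u^2 = 0 :=
    aux_cancel _ _ (pow_pos hv0 2) hE11m
  have hNUm : (u^2) * (-(c 0 0 0 0) + (c 2 2 2 2)) = 0 := by linear_combination (-1) * hE10 + (1) * hE11
  have hNU : -(c 0 0 0 0) + (c 2 2 2 2) = 0 := aux_cancel _ _ (pow_pos hu0 2) hNUm
  have hT12 : 2*(c 0 1 0 1)*u^3 - (c 0 0 0 0)*u*v^2 - (c 2 2 2 2)*u*v^2 = 0 := by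
    linear_combination ((1/4)) * hYpp1 + ((1/4)) * hYpm1 + ((-1/4)) * hYmp1 + ((-1/4)) * hYmm1 + (-u*v^2) * hA2 + (-u*v^2) * hA3
  have hT13 : 2*(c 0 1 0 1)*u^3 - (c 1 1 1 1)*u*v^2 - (c 2 2 2 2)*u*v^2 = 0 := by
    linear_combination ((1/4)) * hXpp0 + ((1/4)) * hXpm0 + ((-1/4)) * hXmp0 + ((-1/4)) * hXmm0 + (-u*v^2) * hA2 + (-u*v^2) * hA1
  have hE13m : (u) * (-(c 0 0 0 0)*v^2 + 2*(c 0 1 0 1)*u^2 - (c 2 2 2 2)*v^2) = 0 := by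
    linear_combination (1) * hT12
  have hE13 : -(c 0 0 0 0)*v^2 + 2*(c 0 1 0 1)*u^2 - (c 2 2 2 2)*v^2 = 0 :=
    aux_cancel _ _ (hu0) hE13m
  have hE14m : (u) * (2*(c 0 1 0 1)*u^2 - (c 1 1 1 1)*v^2 - (c 2 2 2 2)*v^2) = 0 := by
    linear_combination (1) * hT13
  have hE14 : 2*(c 0 1 0 1)*u^2 - (c 1 1 1 1)*v^2 - (c 2 2 2 2)*v^2 = 0 :=
    aux_cancel _ _ (hu0) hE14m
  have hMUm : (v^2) * (-(c 0 0 0 0) + (c 1 1 1 1)) = 0 := by linear_combination (1) * hE13 + (-1) * hE14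
  have hMU : -(c 0 0 0 0) + (c 1 1 1 1) = 0 := aux_cancel _ _ (pow_pos hv0 2) hMUm
  have hCG : (c 2 0 2 0) - (c 0 0 0 0)*γ = 0 := by linear_combination ((1/2)) * hE11 + ((1/2)*u^2) * hMU + ((c 0 0 0 0)) * hu2
  have hAm : (u^2) * ((c 0 1 0 1) - α*(c 0 0 0 0)) = 0 := by linear_combination ((1/2)) * hE13 + ((1/2)*v^2) * hNU + ((c 0 0 0 0)) * hv2 + (-α*(c 0 0 0 0)) * hu2
  have hAe : (c 0 1 0 1) - α*(c 0 0 0 0) = 0 := aux_cancel _ _ (pow_pos hu0 2) hAm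
  have hT14 : -(c 0 0 0 0)*u*v - (c 1 1 1 1)*u*v + 2*(c 1 2 1 2)*u*v^3 = 0 := by
    linear_combination ((1/4)) * hYpp2 + ((-1/4)) * hYpm2 + ((-1/4)) * hYmp2 + ((1/4)) * hYmm2 + (-u*v) * hA1 + (-u*v) * hA3
  have hE17m : (u*v) * (-(c 0 0 0 0) - (c 1 1 1 1) + 2*(c 1 2 1 2)*v^2) = 0 := by
    linear_combination (1) * hT14
  have hE17 : -(c 0 0 0 0) - (c 1 1 1 1) + 2*(c 1 2 1 2)*v^2 = 0 :=
    aux_cancel _ _ (mul_pos (hu0) (hv0)) hE17m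
  have hBm : (v^2) * ((c 1 2 1 2) - β*(c 0 0 0 0)) = 0 := by linear_combination ((1/2)) * hE17 + ((1/2)) * hMU + (-β*(c 0 0 0 0)) * hv2 + (-(c 0 0 0 0)) * habc
  have hBe : (c 1 2 1 2) - β*(c 0 0 0 0) = 0 := aux_cancel _ _ (pow_pos hv0 2) hBm
  refine ⟨c 0 0 0 0, ?_, ?_, ?_⟩
  · have l := (h ![1,0,0] ![1,0,0]).1
    rw [hexpand2] at l
    simp at l
    linarith [l]
  · have r := (h ![1,0,0] ![1,0,0]).2
    rw [hexpand2] at r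
    rw [hQg] at r
    simp at r
    linarith [r]
  · intro x y
    rw [hexpand2 x y, hQg x y]
    linear_combination ((x 1)^2*(y 1)^2) * hMU
      + ((x 2)^2*(y 2)^2) * hNU
      + ((x 0)^2*(y 1)^2) * hAe
      + ((x 1)^2*(y 2)^2) * hBe
      + ((x 2)^2*(y 0)^2) * hCG
      + ((x 0)*(x 1)*(y 0)*(y 1)) * hA2
      + (-(x 0)*(x 1)*(y 0)*(y 1)) * hMU
      + ((x 1)*(x 2)*(y 1)*(y 2)) * hA3
      + (-(x 1)*(x 2)*(y 1)*(y 2)) * hMU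
      + (-(x 1)*(x 2)*(y 1)*(y 2)) * hNU
      + ((x 0)*(x 2)*(y 0)*(y 2)) * hA1
      + (-(x 0)*(x 2)*(y 0)*(y 2)) * hNU
      + ((x 0)^2*(y 0)*(y 1)) * hW1
      + ((x 0)*(x 1)*(y 1)^2) * hB2
      + (-(x 0)*(x 1)*(y 1)^2) * hW1
      + ((x 1)^2*(y 1)*(y 2)) * hW3
      + ((x 1)*(x 2)*(y 2)^2) * hB3
      + (-(x 1)*(x 2)*(y 2)^2) * hW3
      + ((x 0)*(x 2)*(y 0)^2) * hW5
      + ((x 2)^2*(y 0)*(y 2)) * hB1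
      + (-(x 2)^2*(y 0)*(y 2)) * hW5
      + ((x 0)*(x 1)*(y 0)*(y 2)) * hM1
      + ((x 0)*(x 1)*(y 1)*(y 2)) * hM2
      + ((x 1)*(x 2)*(y 0)*(y 1)) * hM3
      + ((x 1)*(x 2)*(y 0)*(y 2)) * hM4
      + ((x 0)*(x 2)*(y 0)*(y 1)) * hM5
      + ((x 0)*(x 2)*(y 1)*(y 2)) * hM6
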